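/- arXiv:2510.27555 — 2 statements merged into one kernel-verified Lean document; each statement's English description precedes it below -/
import Mathlib

section
/- Let d₁, d₂, d₃ > 0 and set A_{kl} = (d_k + d_l)/(2√(d_k d_l)) for k,l ∈ {1,2,3}. Suppose θ, σ > 0 satisfy θ > A₁₂ and (θ² − A₁₂²)(θ²σ² − A₁₃²) > (A₂₃θ² − A₁₂A₁₃)². Then for all nonnegative integers i ≤ j, the symmetric 3×3 matrix B_{ij} with entries B₁₁ = d₁θ^{(i+2)²}σ^{(j+2)²}, B₁₂ = ((d₁+d₂)/2)θ^{(i+1)²}σ^{(j+2)²}, B₁₃ = ((d₁+d₃)/2)θ^{(i+1)²}σ^{(j+1)²}, B₂₂ = d₂θ^{i²}σ^{(j+2)²}, B₂₃ = ((d₂+d₃)/2)θ^{i²}σ^{(j+1)²}, B₃₃ = d₃θ^{i²}σ^{j²} is positive definite. -/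
/-!
Write `t = θ ^ i ^ 2 * σ ^ j ^ 2` and `d_k = s_k ^ 2`. Then
`B_{ij} = t • (W * C * W)` with `W = diag (s₁ θ^(2i+2) σ^(2j+2), s₂ σ^(2j+2), s₃)` and
`C = !![1, A₁₂/θ, A₁₃/(θσ); A₁₂/θ, 1, A₂₃/σ; A₁₃/(θσ), A₂₃/σ, 1]`, a matrix that does not depend
on `i, j`. By Sylvester's criterion `C` is positive definite: its leading minors are
`(θ² - A₁₂²)/θ²` and `((θ² - A₁₂²)(θ²σ² - A₁₃²) - (A₂₃θ² - A₁₂A₁₃)²)/(θ⁴σ²)`.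
-/

open Matrix

theorem Matrix.posDef_fin_three_of_minors {a b c p q r : ℝ} (ha : 0 < a)
    (hab : 0 < a * b - p ^ 2) (hdet : 0 < !![a, p, q; p, b, r; q, r, c].det) :
    (!![a, p, q; p, b, r; q, r, c]).PosDef := by
  refine PosDef.of_dotProduct_mulVec_pos ?_ fun v hv => ?_
  · ext k l
    fin_cases k <;> fin_cases l <;> rfl
  simp only [det_fin_three, of_apply, cons_val', cons_val_zero, cons_val_one, cons_val_two,
    empty_val', cons_val_fin_one, head_cons, head_fin_const, tail_cons] at hdet
  set D := a * b * c - a * r * r - p * p * c + p * r * q + q * p * r - q * b * q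
  set x := v 0
  set y := v 1
  set z := v 2
  set X := a * x + p * y + q * z
  set Y := (a * b - p ^ 2) * y + (a * r - p * q) * z
  -- completing the square twice (the `LDLᵀ` decomposition)
  have hform : a * (a * b - p ^ 2) * (star v ⬝ᵥ (!![a, p, q; p, b, r; q, r, c] *ᵥ v)) =
      (a * b - p ^ 2) * X ^ 2 + Y ^ 2 + a * D * z ^ 2 := by
    simp [dotProduct, mulVec, Fin.sum_univ_three, x, y, z, X, Y, D]
    ring
  have hX := mul_nonneg hab.le (sq_nonneg X)
  have hY := sq_nonneg Y
  have hZ := mul_nonneg (mul_pos ha hdet).le (sq_nonneg z)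
  suffices hsum : 0 < (a * b - p ^ 2) * X ^ 2 + Y ^ 2 + a * D * z ^ 2 from
    pos_of_mul_pos_right (hform ▸ hsum) (mul_pos ha hab).le
  refine lt_of_le_of_ne (by positivity) fun hzero => hv ?_
  have hz : z = 0 := by
    have : a * D * z ^ 2 = 0 := by linarith
    simpa [ha.ne', hdet.ne'] using this
  have hy : y = 0 := by
    have : Y = 0 := by simpa using (show Y ^ 2 = 0 by linarith)
    simpa [Y, hz, hab.ne'] using this
  have hx : x = 0 := by
    have : (a * b - p ^ 2) * X ^ 2 = 0 := by linarith
    simpa [X, hy, hz, hab.ne', ha.ne'] using this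
  ext k
  fin_cases k <;> assumption

theorem Matrix.PosDef.diagonal_mul_mul_diagonal {n R : Type*} [Fintype n] [DecidableEq n]
    [CommRing R] [PartialOrder R] [StarRing R] [TrivialStar R] {M : Matrix n n R} (hM : M.PosDef)
    {v : n → R} (hv : ∀ i, IsUnit (v i)) : (diagonal v * M * diagonal v).PosDef := by
  have hU : IsUnit (diagonal v) := isUnit_diagonal.mpr (Pi.isUnit_iff.mpr hv)
  simpa [star_eq_conjTranspose, diagonal_conjTranspose] using
    (IsUnit.posDef_star_left_conjugate_iff hU).mpr hM

theorem posDef_correlation_fin_three {θ σ a b c : ℝ} (hθ : 0 < θ) (hσ : 0 < σ) (ha : 0 ≤ a)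
    (haθ : a < θ) (h : (c * θ ^ 2 - a * b) ^ 2 < (θ ^ 2 - a ^ 2) * (θ ^ 2 * σ ^ 2 - b ^ 2)) :
    (!![1, a / θ, b / (θ * σ); a / θ, 1, c / σ; b / (θ * σ), c / σ, 1]).PosDef := by
  refine posDef_fin_three_of_minors one_pos ?_ ?_
  · have : a / θ < 1 := (div_lt_one hθ).mpr haθ
    have : 0 ≤ a / θ := by positivity
    nlinarith
  · have hdet : !![1, a / θ, b / (θ * σ); a / θ, 1, c / σ; b / (θ * σ), c / σ, 1].det =
        ((θ ^ 2 - a ^ 2) * (θ ^ 2 * σ ^ 2 - b ^ 2) - (c * θ ^ 2 - a * b) ^ 2) /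
          (θ ^ 4 * σ ^ 2) := by
      simp only [det_fin_three, of_apply, cons_val', cons_val_zero, cons_val_one, cons_val,
        cons_val_fin_one, mul_one, one_mul]
      field_simp
      ring
    rw [hdet]
    exact div_pos (by linarith) (by positivity)

theorem Bij_posDef_general
    (d₁ d₂ d₃ : ℝ) (hd₁ : 0 < d₁) (hd₂ : 0 < d₂) (hd₃ : 0 < d₃)
    (θ σ : ℝ) (hθ : 0 < θ) (hσ : 0 < σ)
    (A₁₂ A₁₃ A₂₃ : ℝ)
    (hA₁₂ : A₁₂ = (d₁ + d₂) / (2 * Real.sqrt (d₁ * d₂)))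
    (hA₁₃ : A₁₃ = (d₁ + d₃) / (2 * Real.sqrt (d₁ * d₃)))
    (hA₂₃ : A₂₃ = (d₂ + d₃) / (2 * Real.sqrt (d₂ * d₃)))
    (h1 : A₁₂ < θ)
    (h2 : (A₂₃ * θ ^ 2 - A₁₂ * A₁₃) ^ 2 <
      (θ ^ 2 - A₁₂ ^ 2) * (θ ^ 2 * σ ^ 2 - A₁₃ ^ 2))
    (i j : ℕ) :
    Matrix.PosDef
      !![d₁ * θ ^ ((i + 2) ^ 2) * σ ^ ((j + 2) ^ 2),
         (d₁ + d₂) / 2 * θ ^ ((i + 1) ^ 2) * σ ^ ((j + 2) ^ 2),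
         (d₁ + d₃) / 2 * θ ^ ((i + 1) ^ 2) * σ ^ ((j + 1) ^ 2);
         (d₁ + d₂) / 2 * θ ^ ((i + 1) ^ 2) * σ ^ ((j + 2) ^ 2),
         d₂ * θ ^ (i ^ 2) * σ ^ ((j + 2) ^ 2),
         (d₂ + d₃) / 2 * θ ^ (i ^ 2) * σ ^ ((j + 1) ^ 2);
         (d₁ + d₃) / 2 * θ ^ ((i + 1) ^ 2) * σ ^ ((j + 1) ^ 2),
         (d₂ + d₃) / 2 * θ ^ (i ^ 2) * σ ^ ((j + 1) ^ 2),
         d₃ * θ ^ (i ^ 2) * σ ^ (j ^ 2)] := by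
  obtain ⟨s₁, hs₁, rfl⟩ : ∃ s, 0 < s ∧ s ^ 2 = d₁ := ⟨√d₁, by positivity, Real.sq_sqrt hd₁.le⟩
  obtain ⟨s₂, hs₂, rfl⟩ : ∃ s, 0 < s ∧ s ^ 2 = d₂ := ⟨√d₂, by positivity, Real.sq_sqrt hd₂.le⟩
  obtain ⟨s₃, hs₃, rfl⟩ : ∃ s, 0 < s ∧ s ^ 2 = d₃ := ⟨√d₃, by positivity, Real.sq_sqrt hd₃.le⟩
  rw [← mul_pow, Real.sqrt_sq (by positivity)] at hA₁₂ hA₁₃ hA₂₃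
  have hC := posDef_correlation_fin_three hθ hσ (hA₁₂ ▸ by positivity) h1 h2
  set w : Fin 3 → ℝ := ![s₁ * θ ^ (2 * i + 2) * σ ^ (2 * j + 2), s₂ * σ ^ (2 * j + 2), s₃]
  have hw : ∀ k, IsUnit (w k) := by
    refine fun k => Ne.isUnit ?_
    fin_cases k <;> simp [w, hs₁.ne', hs₂.ne', hs₃.ne', hθ.ne', hσ.ne']
  refine (congrArg Matrix.PosDef ?_).mpr ((hC.diagonal_mul_mul_diagonal hw).smul
    (mul_pos (pow_pos hθ (i ^ 2)) (pow_pos hσ (j ^ 2))))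
  subst hA₁₂ hA₁₃ hA₂₃
  refine Matrix.ext fun k l => ?_
  fin_cases k <;> fin_cases l <;> simp [w] <;> field_simp <;> ring

theorem Bij_posDef
    (d₁ d₂ d₃ : ℝ) (hd₁ : 0 < d₁) (hd₂ : 0 < d₂) (hd₃ : 0 < d₃)
    (θ σ : ℝ) (hθ : 0 < θ) (hσ : 0 < σ)
    (A₁₂ A₁₃ A₂₃ : ℝ)
    (hA₁₂ : A₁₂ = (d₁ + d₂) / (2 * Real.sqrt (d₁ * d₂)))
    (hA₁₃ : A₁₃ = (d₁ + d₃) / (2 * Real.sqrt (d₁ * d₃)))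
    (hA₂₃ : A₂₃ = (d₂ + d₃) / (2 * Real.sqrt (d₂ * d₃)))
    (h1 : A₁₂ < θ)
    (h2 : (A₂₃ * θ ^ 2 - A₁₂ * A₁₃) ^ 2 <
      (θ ^ 2 - A₁₂ ^ 2) * (θ ^ 2 * σ ^ 2 - A₁₃ ^ 2))
    (i j : ℕ) (hij : i ≤ j) :
    Matrix.PosDef
      !![d₁ * θ ^ ((i + 2) ^ 2) * σ ^ ((j + 2) ^ 2),
         (d₁ + d₂) / 2 * θ ^ ((i + 1) ^ 2) * σ ^ ((j + 2) ^ 2),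
         (d₁ + d₃) / 2 * θ ^ ((i + 1) ^ 2) * σ ^ ((j + 1) ^ 2);
         (d₁ + d₂) / 2 * θ ^ ((i + 1) ^ 2) * σ ^ ((j + 2) ^ 2),
         d₂ * θ ^ (i ^ 2) * σ ^ ((j + 2) ^ 2),
         (d₂ + d₃) / 2 * θ ^ (i ^ 2) * σ ^ ((j + 1) ^ 2);
         (d₁ + d₃) / 2 * θ ^ ((i + 1) ^ 2) * σ ^ ((j + 1) ^ 2),
         (d₂ + d₃) / 2 * θ ^ (i ^ 2) * σ ^ ((j + 1) ^ 2),
         d₃ * θ ^ (i ^ 2) * σ ^ (j ^ 2)] :=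
  Bij_posDef_general d₁ d₂ d₃ hd₁ hd₂ hd₃ θ σ hθ hσ A₁₂ A₁₃ A₂₃ hA₁₂ hA₁₃ hA₂₃ h1 h2 i j
end

section
/- Let p ≥ 1 be an integer, M₁, M₂ > 0, and let L : [0,T] → ℝ be a nonnegative differentiable function satisfying L′(t) ≤ M₁·L(t) + M₂·L(t)^{(p−1)/p} for all t ∈ [0,T]. Then E := L^{1/p} satisfies p·E′(t) ≤ M₁·E(t) + M₂ on the set where L > 0, and consequently L is bounded on [0,T] by a constant depending only on L(0), M₁, M₂, p, T; in particular L(t) ≤ ((L(0)^{1/p} + M₂/M₁)·e^{M₁t/p} − M₂/M₁)^p. -/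
/-!
With `q = 1/p`, the chain rule gives `p (L^q)' = L' L^(q-1)`, and multiplying the hypothesis by
`L^(q-1)` turns it into `M₁ L^q + M₂`, because `(L^q)^(p-1) L^(q-1) = 1`. So `E = L^q` obeys the
linear differential inequality `p E' ≤ M₁ E + M₂`, and Grönwall's inequality bounds `E`.
Since `L^q` need not be differentiable where `L` vanishes, Grönwall is applied to
`(L + ε)^q`, for which the same estimate holds because `L ≤ L + ε`, and then `ε → 0⁺`.
-/

open Set Real

lemma rpow_one_div_pow_pred_mul_rpow_sub_one_le_one {p : ℕ} (hp : 1 ≤ p) {a y : ℝ}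
    (ha : 0 ≤ a) (hay : a ≤ y) (hy : 0 < y) :
    (a ^ ((1 : ℝ) / p)) ^ (p - 1) * y ^ ((1 : ℝ) / p - 1) ≤ 1 := by
  have hexp : (1 : ℝ) / p * ((p - 1 : ℕ) : ℝ) = -((1 : ℝ) / p - 1) := by
    rw [Nat.cast_sub hp, Nat.cast_one]
    field_simp
    ring
  calc (a ^ ((1 : ℝ) / p)) ^ (p - 1) * y ^ ((1 : ℝ) / p - 1)
      ≤ (y ^ ((1 : ℝ) / p)) ^ (p - 1) * y ^ ((1 : ℝ) / p - 1) := by gcongr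
    _ = 1 := by
      rw [← rpow_natCast, ← rpow_mul hy.le, hexp, rpow_neg hy.le, inv_mul_cancel₀ (by positivity)]

lemma mul_rpow_one_div_sub_one_le {p : ℕ} (hp : 1 ≤ p) {M₁ M₂ a y d : ℝ} (hM₁ : 0 ≤ M₁)
    (hM₂ : 0 ≤ M₂) (ha : 0 ≤ a) (hay : a ≤ y) (hy : 0 < y)
    (hd : d ≤ M₁ * a + M₂ * (a ^ ((1 : ℝ) / p)) ^ (p - 1)) :
    d * y ^ ((1 : ℝ) / p - 1) ≤ M₁ * y ^ ((1 : ℝ) / p) + M₂ := by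
  have hpow : y * y ^ ((1 : ℝ) / p - 1) = y ^ ((1 : ℝ) / p) := by
    rw [rpow_sub_one hy.ne', mul_div_cancel₀ _ hy.ne']
  calc d * y ^ ((1 : ℝ) / p - 1)
      ≤ (M₁ * a + M₂ * (a ^ ((1 : ℝ) / p)) ^ (p - 1)) * y ^ ((1 : ℝ) / p - 1) := by
        gcongr
    _ = M₁ * (a * y ^ ((1 : ℝ) / p - 1))
          + M₂ * ((a ^ ((1 : ℝ) / p)) ^ (p - 1) * y ^ ((1 : ℝ) / p - 1)) := by ring
    _ ≤ M₁ * (y * y ^ ((1 : ℝ) / p - 1)) + M₂ * 1 := by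
        gcongr
        exact rpow_one_div_pow_pred_mul_rpow_sub_one_le_one hp ha hay hy
    _ = M₁ * y ^ ((1 : ℝ) / p) + M₂ := by rw [hpow, mul_one]

lemma HasDerivAt.rpow_one_div {f : ℝ → ℝ} {f' x : ℝ} (p : ℕ) (hf : HasDerivAt f f' x)
    (hx : f x ≠ 0) :
    HasDerivAt (fun s => f s ^ ((1 : ℝ) / p)) (f' * f x ^ ((1 : ℝ) / p - 1) / p) x := by
  convert hf.rpow_const (p := (1 : ℝ) / p) (Or.inl hx) using 1
  ring

lemma le_linear_gronwall_of_hasDerivAt {g g' : ℝ → ℝ} {K B a b : ℝ} (hK : K ≠ 0)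
    (hg : ∀ x ∈ Icc a b, HasDerivAt g (g' x) x) (bound : ∀ x ∈ Ico a b, g' x ≤ K * g x + B) :
    ∀ t ∈ Icc a b, g t ≤ (g a + B / K) * exp (K * (t - a)) - B / K := by
  intro t ht
  have hcont : ContinuousOn g (Icc a b) := fun x hx => (hg x hx).continuousAt.continuousWithinAt
  have := le_gronwallBound_of_liminf_deriv_right_le hcont
    (fun x hx _ hr => (hg x (Ico_subset_Icc_self hx)).hasDerivWithinAt.liminf_right_slope_le hr)
    le_rfl bound t ht
  rw [gronwallBound_of_K_ne_0 hK] at this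
  linarith

lemma add_le_gronwall_pow_of_deriv_le {p : ℕ} (hp : 1 ≤ p) {M₁ M₂ T ε : ℝ} (hM₁ : 0 < M₁)
    (hM₂ : 0 ≤ M₂) (hε : 0 < ε) {L L' : ℝ → ℝ}
    (hLnonneg : ∀ t ∈ Icc 0 T, 0 ≤ L t) (hderiv : ∀ t ∈ Icc 0 T, HasDerivAt L (L' t) t)
    (hineq : ∀ t ∈ Icc 0 T, L' t ≤ M₁ * L t + M₂ * (L t ^ ((1 : ℝ) / p)) ^ (p - 1)) :
    ∀ t ∈ Icc 0 T, L t + ε ≤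
      (((L 0 + ε) ^ ((1 : ℝ) / p) + M₂ / M₁) * exp (M₁ * t / p) - M₂ / M₁) ^ p := by
  have hp0 : (0 : ℝ) < p := by exact_mod_cast hp
  have hpos : ∀ t ∈ Icc 0 T, 0 < L t + ε := fun t ht => by linarith [hLnonneg t ht]
  set g : ℝ → ℝ := fun s => (L s + ε) ^ ((1 : ℝ) / p)
  have hg : ∀ t ∈ Icc 0 T,
      HasDerivAt g (L' t * (L t + ε) ^ ((1 : ℝ) / p - 1) / p) t := fun t ht =>
    ((hderiv t ht).add_const ε).rpow_one_div p (hpos t ht).ne'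
  have bound : ∀ t ∈ Ico 0 T,
      L' t * (L t + ε) ^ ((1 : ℝ) / p - 1) / p ≤ M₁ / p * g t + M₂ / p := by
    intro t ht
    have ht' := Ico_subset_Icc_self ht
    rw [← mul_div_right_comm, ← add_div, div_le_div_iff_of_pos_right hp0]
    exact mul_rpow_one_div_sub_one_le hp hM₁.le hM₂ (hLnonneg t ht') (by linarith)
      (hpos t ht') (hineq t ht')
  intro t ht
  have hgt := le_linear_gronwall_of_hasDerivAt (by positivity) hg bound t ht
  have hratio : M₂ / p / (M₁ / p) = M₂ / M₁ := by field_simp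
  rw [hratio, sub_zero, div_mul_eq_mul_div] at hgt
  calc L t + ε = g t ^ p := by
        simp only [g, one_div, rpow_inv_natCast_pow (hpos t ht).le (by omega : p ≠ 0)]
    _ ≤ _ := by gcongr; exact rpow_nonneg (hpos t ht).le _

theorem gronwall_type_bound_general
    (p : ℕ) (hp : 1 ≤ p) (M₁ M₂ T : ℝ) (hM₁ : 0 < M₁) (hM₂ : 0 < M₂)
    (L L' : ℝ → ℝ)
    (hLnonneg : ∀ t ∈ Set.Icc (0 : ℝ) T, 0 ≤ L t)
    (hderiv : ∀ t ∈ Set.Icc (0 : ℝ) T, HasDerivAt L (L' t) t)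
    (hineq : ∀ t ∈ Set.Icc (0 : ℝ) T,
      L' t ≤ M₁ * L t + M₂ * (L t ^ ((1 : ℝ) / p)) ^ (p - 1)) :
    (∀ t ∈ Set.Icc (0 : ℝ) T, 0 < L t →
      (p : ℝ) * deriv (fun s => L s ^ ((1 : ℝ) / p)) t ≤
        M₁ * L t ^ ((1 : ℝ) / p) + M₂) ∧
    (∀ t ∈ Set.Icc (0 : ℝ) T,
      L t ≤ ((L 0 ^ ((1 : ℝ) / p) + M₂ / M₁) * Real.exp (M₁ * t / p) - M₂ / M₁) ^ p) := by
  have hp0 : (p : ℝ) ≠ 0 := by positivity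
  refine ⟨fun t ht hLt => ?_, fun t ht => ?_⟩
  · rw [((hderiv t ht).rpow_one_div p hLt.ne').deriv, mul_div_cancel₀ _ hp0]
    exact mul_rpow_one_div_sub_one_le hp hM₁.le hM₂.le hLt.le le_rfl hLt (hineq t ht)
  · set bound : ℝ → ℝ := fun ε =>
      (((L 0 + ε) ^ ((1 : ℝ) / p) + M₂ / M₁) * exp (M₁ * t / p) - M₂ / M₁) ^ p
    have hcont : ContinuousAt bound 0 := by
      refine (((ContinuousAt.rpow_const ?_ (Or.inr (by positivity))).add_const _).mul_const _
        |>.sub_const _).pow _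
      fun_prop
    have hle : ∀ ε > 0, L t ≤ bound ε := fun ε hε => by
      linarith [add_le_gronwall_pow_of_deriv_le hp hM₁ hM₂.le hε hLnonneg hderiv hineq t ht]
    simpa [bound] using ge_of_tendsto hcont.continuousWithinAt.tendsto
      (eventually_nhdsWithin_of_forall (s := Ioi 0) hle)

theorem gronwall_type_bound
    (p : ℕ) (hp : 1 ≤ p) (M₁ M₂ T : ℝ) (hM₁ : 0 < M₁) (hM₂ : 0 < M₂) (hT : 0 ≤ T)
    (L L' : ℝ → ℝ)
    (hLnonneg : ∀ t ∈ Set.Icc (0 : ℝ) T, 0 ≤ L t)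
    (hderiv : ∀ t ∈ Set.Icc (0 : ℝ) T, HasDerivAt L (L' t) t)
    (hineq : ∀ t ∈ Set.Icc (0 : ℝ) T,
      L' t ≤ M₁ * L t + M₂ * (L t ^ ((1 : ℝ) / p)) ^ (p - 1)) :
    (∀ t ∈ Set.Icc (0 : ℝ) T, 0 < L t →
      (p : ℝ) * deriv (fun s => L s ^ ((1 : ℝ) / p)) t ≤
        M₁ * L t ^ ((1 : ℝ) / p) + M₂) ∧
    (∀ t ∈ Set.Icc (0 : ℝ) T,
      L t ≤ ((L 0 ^ ((1 : ℝ) / p) + M₂ / M₁) * Real.exp (M₁ * t / p) - M₂ / M₁) ^ p) :=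
  gronwall_type_bound_general p hp M₁ M₂ T hM₁ hM₂ L L' hLnonneg hderiv hineq
end
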